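/- The 6-dimensional real Lie algebra h₂(ℝ) ⊕ ℝ (trivial one-dimensional extension of the 5-dimensional Heisenberg algebra) admits no symplectic form: every closed 2-form on it is degenerate. -/

import Mathlib

/-!
The centre element `e₅` is a commutator in two ways, `⁅e₁, e₂⁆` and `⁅e₃, e₄⁆`. Closedness of `ω`
kills `ω ⁅U, V⁆ W` as soon as `W` commutes with `U` and `V`, and every basis vector other than `e₅`
commutes with both factors of one of these two presentations. Hence `ω e₅` vanishes on a basis.
-/

def IsClosedForm {R L M : Type*} [CommSemiring R] [LieRing L] [Module R L] [AddCommMonoid M]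
    [Module R M] (ω : L →ₗ[R] L →ₗ[R] M) : Prop :=
  ∀ U V W : L, ω ⁅U, V⁆ W + ω ⁅V, W⁆ U + ω ⁅W, U⁆ V = 0

theorem IsClosedForm.apply_lie_eq_zero {R L M : Type*} [CommSemiring R] [LieRing L] [Module R L]
    [AddCommMonoid M] [Module R M] {ω : L →ₗ[R] L →ₗ[R] M} (hω : IsClosedForm ω) {U V W : L}
    (hUW : ⁅U, W⁆ = 0) (hVW : ⁅V, W⁆ = 0) : ω ⁅U, V⁆ W = 0 := by
  have hWU : ⁅W, U⁆ = 0 := by rw [← lie_skew, hUW, neg_zero]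
  simpa [hVW, hWU] using hω U V W

theorem stmt_18_general {h : Type*} [LieRing h] [LieAlgebra ℝ h]
    (b : Module.Basis (Fin 6) ℝ h)
    (h01 : ⁅b 0, b 1⁆ = b 4) (h23 : ⁅b 2, b 3⁆ = b 4)
    (h02 : ⁅b 0, b 2⁆ = 0) (h03 : ⁅b 0, b 3⁆ = 0)
    (h12 : ⁅b 1, b 2⁆ = 0) (h13 : ⁅b 1, b 3⁆ = 0)
    (hc5 : ∀ x : h, ⁅b 5, x⁆ = 0) :
    ∀ ω : h →ₗ[ℝ] h →ₗ[ℝ] ℝ, (∀ x : h, ω x x = 0) →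
      (∀ U V W : h, ω ⁅U, V⁆ W + ω ⁅V, W⁆ U + ω ⁅W, U⁆ V = 0) →
      ∃ X : h, X ≠ 0 ∧ ∀ Y : h, ω X Y = 0 := by
  intro ω halt hcl
  have hω : IsClosedForm ω := hcl
  have comm {x y : h} (hxy : ⁅x, y⁆ = 0) : ⁅y, x⁆ = 0 := by rw [← lie_skew, hxy, neg_zero]
  have hz : ω (b 4) = 0 := b.ext fun i => by
    fin_cases i
    · simpa [h23] using hω.apply_lie_eq_zero (comm h02) (comm h03)
    · simpa [h23] using hω.apply_lie_eq_zero (comm h12) (comm h13)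
    · simpa [h01] using hω.apply_lie_eq_zero h02 h12
    · simpa [h01] using hω.apply_lie_eq_zero h03 h13
    · simpa using halt (b 4)
    · simpa [h23] using hω.apply_lie_eq_zero (comm (hc5 (b 2))) (comm (hc5 (b 3)))
  exact ⟨b 4, b.ne_zero 4, fun Y => by rw [hz, LinearMap.zero_apply]⟩

/-- The 6-dimensional real Lie algebra `h₂(ℝ) ⊕ ℝ` (basis `e₁,…,e₆`, nonzero brackets
`⁅e₁,e₂⁆ = ⁅e₃,e₄⁆ = e₅`) admits no symplectic form: every closed 2-form on it is
degenerate. -/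
theorem stmt_18 {h : Type*} [LieRing h] [LieAlgebra ℝ h]
    (b : Module.Basis (Fin 6) ℝ h)
    (h01 : ⁅b 0, b 1⁆ = b 4) (h23 : ⁅b 2, b 3⁆ = b 4)
    (h02 : ⁅b 0, b 2⁆ = 0) (h03 : ⁅b 0, b 3⁆ = 0)
    (h12 : ⁅b 1, b 2⁆ = 0) (h13 : ⁅b 1, b 3⁆ = 0)
    (hc4 : ∀ x : h, ⁅b 4, x⁆ = 0) (hc5 : ∀ x : h, ⁅b 5, x⁆ = 0) :
    ∀ ω : h →ₗ[ℝ] h →ₗ[ℝ] ℝ, (∀ x : h, ω x x = 0) →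
      (∀ U V W : h, ω ⁅U, V⁆ W + ω ⁅V, W⁆ U + ω ⁅W, U⁆ V = 0) →
      ∃ X : h, X ≠ 0 ∧ ∀ Y : h, ω X Y = 0 :=
  stmt_18_general b h01 h23 h02 h03 h12 h13 hc5
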